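/- arXiv:1605.06430 — 4 statements merged into one kernel-verified Lean document; each statement's English description precedes it below -/
import Mathlib

section
/- If m(0)=m₀≥0, p(0)=p₀≥0 and m₀+p₀>0, then the solution (m(t),p(t)) of the system m' = κζχω p − ε m, p' = φ m ψ(p/C) − (π+ω) p satisfies m(t)>0 and p(t)>0 for all t>0. -/
/-!
Where `p` vanishes, `p' = φ m ψ 0 = φ m`; and as long as `p > 0`, the integrating factor
`e^{εt}` makes `e^{εt} m` strictly increasing, so `m > 0`. Hence at a first zero `T > 0` of `p`
we would have `p'(T) > 0` while `p > 0` just before `T`, which is impossible. The same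
computation at `t = 0` (when `p 0 = 0`, so `m 0 > 0`) shows that `p` becomes positive at once.
-/

open Set Filter Topology

theorem HasDerivAt.eventually_slope_pos {f : ℝ → ℝ} {f' x : ℝ} (hf : HasDerivAt f f' x)
    (hf' : 0 < f') : ∀ᶠ y in 𝓝[≠] x, 0 < slope f x y :=
  (hasDerivAt_iff_tendsto_slope.mp hf).eventually (eventually_gt_nhds hf')

theorem HasDerivAt.eventually_lt_nhdsLT {f : ℝ → ℝ} {f' x : ℝ} (hf : HasDerivAt f f' x)
    (hf' : 0 < f') : ∀ᶠ y in 𝓝[<] x, f y < f x := by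
  filter_upwards [(hf.eventually_slope_pos hf').filter_mono (nhdsLT_le_nhdsNE x),
    self_mem_nhdsWithin] with y hy hyx
  exact (slope_pos_iff_gt hyx).mp hy

theorem HasDerivAt.eventually_gt_nhdsGT {f : ℝ → ℝ} {f' x : ℝ} (hf : HasDerivAt f f' x)
    (hf' : 0 < f') : ∀ᶠ y in 𝓝[>] x, f x < f y := by
  filter_upwards [(hf.eventually_slope_pos hf').filter_mono (nhdsGT_le_nhdsNE x),
    self_mem_nhdsWithin] with y hy hxy
  exact (slope_pos_iff hxy).mp hy

theorem pos_of_hasDerivAt_sub_mul_self {f g : ℝ → ℝ} {ε a b : ℝ} (hab : a < b)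
    (hf : ∀ t ∈ Icc a b, HasDerivAt f (g t - ε * f t) t) (hg : ∀ t ∈ Ioo a b, 0 < g t)
    (ha : 0 ≤ f a) : 0 < f b := by
  set u : ℝ → ℝ := fun t ↦ Real.exp (ε * t) * f t
  have hu : ∀ t ∈ Icc a b, HasDerivAt u (Real.exp (ε * t) * g t) t := fun t ht ↦
    (((hasDerivAt_id' t).const_mul ε).exp.mul (hf t ht)).congr_deriv (by ring)
  have hmono : StrictMonoOn u (Icc a b) :=
    strictMonoOn_of_hasDerivWithinAt_pos (convex_Icc a b)
      (fun t ht ↦ (hu t ht).continuousAt.continuousWithinAt)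
      (fun t ht ↦ (hu t (interior_subset ht)).hasDerivWithinAt)
      (fun t ht ↦ by
        rw [interior_Icc] at ht
        have := hg t ht
        positivity)
  have hub : 0 < u b := calc
    0 ≤ u a := by positivity
    _ < u b := hmono (left_mem_Icc.mpr hab.le) (right_mem_Icc.mpr hab.le) hab
  exact (mul_pos_iff_of_pos_left (Real.exp_pos _)).mp hub

theorem pos_of_no_first_zero {p : ℝ → ℝ} {a t : ℝ}
    (hcont : ∀ s, a < s → ContinuousAt p s) (hstart : ∀ᶠ s in 𝓝[>] a, 0 < p s)
    (hzero : ∀ T, a < T → (∀ s ∈ Ioo a T, 0 < p s) → p T ≠ 0) (ht : a < t) :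
    0 < p t := by
  by_contra! hpt
  set S := {s | a < s ∧ p s ≤ 0}
  have hS : S.Nonempty := ⟨t, ht, hpt⟩
  have hSbdd : BddBelow S := ⟨a, fun s hs ↦ hs.1.le⟩
  obtain ⟨δ, haδ, hpδ⟩ := (nhdsGT_basis a).eventually_iff.mp hstart
  set T := sInf S
  have haT : a < T := haδ.trans_le <|
    le_csInf hS fun s hs ↦ not_lt.mp fun hsδ ↦ (hpδ ⟨hs.1, hsδ⟩).not_ge hs.2
  have hbefore : ∀ s ∈ Ioo a T, 0 < p s := fun s hs ↦
    not_le.mp fun hps ↦ (csInf_le hSbdd ⟨hs.1, hps⟩).not_gt hs.2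
  have hle : p T ≤ 0 := ContinuousWithinAt.closure_le (csInf_mem_closure hS hSbdd)
    (hcont T haT).continuousWithinAt continuousWithinAt_const fun s hs ↦ hs.2
  have hge : 0 ≤ p T := ge_of_tendsto ((hcont T haT).tendsto.mono_left nhdsWithin_le_nhds)
    (eventually_of_mem (Ioo_mem_nhdsLT haT) fun s hs ↦ (hbefore s hs).le)
  exact hzero T haT hbefore (hle.antisymm hge)

theorem mosquito_solution_positive_general
    (φ ε π ω κ χ ζ C : ℝ) (hφ : 0 < φ) (hω : 0 < ω)
    (hκ : 0 < κ) (hχ : 0 < χ) (hζ : 0 < ζ)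
    (ψ : ℝ → ℝ)
    (hψ0 : ψ 0 = 1)
    (m p : ℝ → ℝ)
    (hm : ∀ t, 0 ≤ t → HasDerivAt m (κ * ζ * χ * ω * p t - ε * m t) t)
    (hp : ∀ t, 0 ≤ t → HasDerivAt p (φ * m t * ψ (p t / C) - (π + ω) * p t) t)
    (hm0 : 0 ≤ m 0) (hp0 : 0 ≤ p 0) (hsum : 0 < m 0 + p 0) :
    ∀ t, 0 < t → 0 < m t ∧ 0 < p t := by
  have hp_zero : ∀ t, 0 ≤ t → p t = 0 → HasDerivAt p (φ * m t) t := fun t ht hpt ↦ by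
    simpa [hpt, hψ0] using hp t ht
  have hm_pos : ∀ T, 0 < T → (∀ s ∈ Ioo 0 T, 0 < p s) → 0 < m T := fun T hT hpos ↦
    pos_of_hasDerivAt_sub_mul_self hT (fun t ht ↦ hm t ht.1)
      (fun t ht ↦ by have := hpos t ht; positivity) hm0
  have hstart : ∀ᶠ s in 𝓝[>] 0, 0 < p s := by
    rcases hp0.eq_or_lt with hp0 | hp0
    · have hm0 : 0 < m 0 := by linarith
      simpa [← hp0] using (hp_zero 0 le_rfl hp0.symm).eventually_gt_nhdsGT (by positivity)
    · exact (hp 0 le_rfl).continuousAt.continuousWithinAt.eventually (eventually_gt_nhds hp0)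
  have hp_pos : ∀ t, 0 < t → 0 < p t := fun t ↦
    pos_of_no_first_zero (fun s hs ↦ (hp s hs.le).continuousAt) hstart fun T hT hbefore hpT ↦ by
      have hmT := hm_pos T hT hbefore
      have hlt := (hp_zero T hT.le hpT).eventually_lt_nhdsLT (by positivity)
      obtain ⟨s, hps, hs⟩ := (hlt.and (Ioo_mem_nhdsLT hT)).exists
      exact (hbefore s hs).not_gt (hpT ▸ hps)
  exact fun t ht ↦ ⟨hm_pos t ht fun s hs ↦ hp_pos s hs.1, hp_pos t ht⟩

/-- positivity of solutions of the mosquito life-cycle system. -/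
theorem mosquito_solution_positive
    (φ ε π ω κ χ ζ C : ℝ) (hφ : 0 < φ) (hε : 0 < ε) (hπ : 0 < π) (hω : 0 < ω)
    (hκ : 0 < κ) (hχ : 0 < χ) (hζ : 0 < ζ) (hC : 0 < C)
    (ψ : ℝ → ℝ) (hψcont : Continuous ψ) (hψanti : StrictAntiOn ψ (Set.Icc 0 1))
    (hψ0 : ψ 0 = 1) (hψ1 : ψ 1 = 0) (hψmaps : Set.MapsTo ψ (Set.Icc 0 1) (Set.Icc 0 1))
    (m p : ℝ → ℝ)
    (hm : ∀ t, 0 ≤ t → HasDerivAt m (κ * ζ * χ * ω * p t - ε * m t) t)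
    (hp : ∀ t, 0 ≤ t → HasDerivAt p (φ * m t * ψ (p t / C) - (π + ω) * p t) t)
    (hm0 : 0 ≤ m 0) (hp0 : 0 ≤ p 0) (hsum : 0 < m 0 + p 0) :
    ∀ t, 0 < t → 0 < m t ∧ 0 < p t :=
  mosquito_solution_positive_general φ ε π ω κ χ ζ C hφ hω hκ hχ hζ ψ hψ0 m p hm hp hm0 hp0 hsum
end

section
/- Suppose R_M > 1 and (m̃,p̃) is a nontrivial equilibrium with ψ(p̃/C) = 1/R_M, m̃ = κωζχp̃/ε > 0, and ψ'(p̃/C) < 0. Then the Jacobian at (m̃,p̃), namely [[−ε, κωζχ],[φψ(p̃/C), (φ/C)m̃ψ'(p̃/C) − (π+ω)]], has trace γ = −(ε+π+ω − (φ/C)m̃ψ'(p̃/C)) < 0, determinant χ̂ = −(εφ/C)m̃ψ'(p̃/C) > 0, and discriminant γ² − 4χ̂ = ((ε−(π+ω)) + (φ/C)m̃ψ'(p̃/C))² + 4ε(π+ω) > 0; hence both eigenvalues are real and strictly negative and (m̃,p̃) is a locally asymptotically stable node. -/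
/-!
At the equilibrium, `ψ(p̃/C) = 1/R_M` makes the off-diagonal product of the Jacobian equal to
`ε(π+ω)`, which cancels against the diagonal product, so the determinant is
`-ε (φ/C) m̃ ψ'(p̃/C) > 0`. A real 2×2 matrix with negative trace, positive determinant and
nonnegative discriminant has the two real eigenvalues `(tr ± √(tr² - 4 det)) / 2`, both negative
because `√(tr² - 4 det) < |tr|`.
-/

theorem Matrix.det_smul_one_sub_fin_two {R : Type*} [CommRing R]
    (A : Matrix (Fin 2) (Fin 2) R) (x : R) :
    (x • (1 : Matrix (Fin 2) (Fin 2) R) - A).det = x * x - A.trace * x + A.det := by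
  simp only [Matrix.det_fin_two, Matrix.trace_fin_two, Matrix.sub_apply, Matrix.smul_apply,
    Matrix.one_apply_eq, Matrix.one_apply_ne zero_ne_one, Matrix.one_apply_ne one_ne_zero,
    smul_eq_mul, mul_one, mul_zero]
  ring

theorem exists_neg_roots_quadratic {t d : ℝ} (ht : t < 0) (hd : 0 < d)
    (hdisc : 0 ≤ t ^ 2 - 4 * d) :
    ∃ l₁ l₂ : ℝ, l₁ < 0 ∧ l₂ < 0 ∧ ∀ x, x * x - t * x + d = 0 ↔ x = l₁ ∨ x = l₂ := by
  set s := √(t ^ 2 - 4 * d)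
  have hs : discrim 1 (-t) d = s * s := by
    rw [discrim, Real.mul_self_sqrt hdisc]; ring
  have hst : s < -t := (Real.sqrt_lt' (by linarith)).mpr (by linarith)
  refine ⟨(t + s) / 2, (t - s) / 2, by linarith, by linarith [Real.sqrt_nonneg (t ^ 2 - 4 * d)],
    fun x => ?_⟩
  convert quadratic_eq_zero_iff one_ne_zero hs x using 2 <;> ring_nf

theorem Matrix.exists_neg_eigenvalues_fin_two (A : Matrix (Fin 2) (Fin 2) ℝ)
    (htr : A.trace < 0) (hdet : 0 < A.det) (hdisc : 0 ≤ A.trace ^ 2 - 4 * A.det) :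
    ∃ l₁ l₂ : ℝ, l₁ < 0 ∧ l₂ < 0 ∧
      ∀ x : ℝ, (x • (1 : Matrix (Fin 2) (Fin 2) ℝ) - A).det = 0 ↔ x = l₁ ∨ x = l₂ := by
  simpa only [A.det_smul_one_sub_fin_two] using exists_neg_roots_quadratic htr hdet hdisc

open Matrix in
theorem mosquito_nontrivial_equilibrium_stable_general
    (φ ε π ω κ χ ζ C : ℝ) (hφ : 0 < φ) (hε : 0 < ε) (hπ : 0 < π) (hω : 0 < ω)
    (hκ : 0 < κ) (hχ : 0 < χ) (hζ : 0 < ζ) (hC : 0 < C)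
    (ψ : ℝ → ℝ)
    (RM : ℝ) (hRM : RM = κ * ω * ζ * χ * φ / (ε * (π + ω)))
    (ptil mtil dψ : ℝ)
    (hψval : ψ (ptil / C) = 1 / RM)
    (hmtilpos : 0 < mtil)
    (hdψ : dψ < 0) :
    (-(ε + π + ω - φ / C * mtil * dψ) =
        Matrix.trace !![-ε, κ * ω * ζ * χ;
          φ * ψ (ptil / C), φ / C * mtil * dψ - (π + ω)]) ∧
    -(ε + π + ω - φ / C * mtil * dψ) < 0 ∧
    0 < -(ε * φ / C) * mtil * dψ ∧
    (-(ε + π + ω - φ / C * mtil * dψ)) ^ 2 - 4 * (-(ε * φ / C) * mtil * dψ) =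
      ((ε - (π + ω)) + φ / C * mtil * dψ) ^ 2 + 4 * ε * (π + ω) ∧
    0 < (-(ε + π + ω - φ / C * mtil * dψ)) ^ 2 - 4 * (-(ε * φ / C) * mtil * dψ) ∧
    ∃ lam₁ lam₂ : ℝ, lam₁ < 0 ∧ lam₂ < 0 ∧
      ∀ lam : ℝ,
        Matrix.det (lam • (1 : Matrix (Fin 2) (Fin 2) ℝ) -
            !![-ε, κ * ω * ζ * χ;
               φ * ψ (ptil / C), φ / C * mtil * dψ - (π + ω)]) = 0 ↔
          lam = lam₁ ∨ lam = lam₂ := by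
  set a := φ / C * mtil * dψ
  set J := !![-ε, κ * ω * ζ * χ; φ * ψ (ptil / C), a - (π + ω)]
  have ha : a < 0 := mul_neg_of_pos_of_neg (by positivity) hdψ
  have hequil : κ * ω * ζ * χ * (φ * ψ (ptil / C)) = ε * (π + ω) := by
    rw [hψval, hRM]; field_simp
  have htr : J.trace = -(ε + π + ω - a) := by rw [trace_fin_two_of]; ring
  have hdet : J.det = -(ε * φ / C) * mtil * dψ := by
    rw [det_fin_two_of]; linear_combination -hequil
  have hdetpos : 0 < -(ε * φ / C) * mtil * dψ := by
    have hdet_eq : -(ε * φ / C) * mtil * dψ = ε * -a := by ring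
    rw [hdet_eq]; exact mul_pos hε (neg_pos.mpr ha)
  have hdisc : (-(ε + π + ω - a)) ^ 2 - 4 * (-(ε * φ / C) * mtil * dψ) =
      ((ε - (π + ω)) + a) ^ 2 + 4 * ε * (π + ω) := by ring
  have hdiscpos : 0 < (-(ε + π + ω - a)) ^ 2 - 4 * (-(ε * φ / C) * mtil * dψ) := by
    rw [hdisc]; positivity
  refine ⟨htr.symm, by linarith, hdetpos, hdisc, hdiscpos, J.exists_neg_eigenvalues_fin_two
    (by linarith) (hdet ▸ hdetpos) (by rw [htr, hdet]; exact hdiscpos.le)⟩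

open Matrix in
/-- stability of the nontrivial equilibrium. With ψ(p̃/C)=1/R_M,
m̃ = κωζχp̃/ε > 0 and ψ'(p̃/C) < 0, the Jacobian has negative trace, positive
determinant and positive discriminant, so both eigenvalues are real and negative. -/
theorem mosquito_nontrivial_equilibrium_stable
    (φ ε π ω κ χ ζ C : ℝ) (hφ : 0 < φ) (hε : 0 < ε) (hπ : 0 < π) (hω : 0 < ω)
    (hκ : 0 < κ) (hχ : 0 < χ) (hζ : 0 < ζ) (hC : 0 < C)
    (ψ : ℝ → ℝ) (hψanti : StrictAnti ψ)
    (RM : ℝ) (hRM : RM = κ * ω * ζ * χ * φ / (ε * (π + ω))) (hRM1 : 1 < RM)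
    (ptil mtil dψ : ℝ)
    (hψval : ψ (ptil / C) = 1 / RM)
    (hmtil : mtil = κ * ω * ζ * χ * ptil / ε) (hmtilpos : 0 < mtil)
    (hderiv : HasDerivAt ψ dψ (ptil / C)) (hdψ : dψ < 0) :
    (-(ε + π + ω - φ / C * mtil * dψ) =
        Matrix.trace !![-ε, κ * ω * ζ * χ;
          φ * ψ (ptil / C), φ / C * mtil * dψ - (π + ω)]) ∧
    -(ε + π + ω - φ / C * mtil * dψ) < 0 ∧
    0 < -(ε * φ / C) * mtil * dψ ∧
    (-(ε + π + ω - φ / C * mtil * dψ)) ^ 2 - 4 * (-(ε * φ / C) * mtil * dψ) =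
      ((ε - (π + ω)) + φ / C * mtil * dψ) ^ 2 + 4 * ε * (π + ω) ∧
    0 < (-(ε + π + ω - φ / C * mtil * dψ)) ^ 2 - 4 * (-(ε * φ / C) * mtil * dψ) ∧
    ∃ lam₁ lam₂ : ℝ, lam₁ < 0 ∧ lam₂ < 0 ∧
      ∀ lam : ℝ,
        Matrix.det (lam • (1 : Matrix (Fin 2) (Fin 2) ℝ) -
            !![-ε, κ * ω * ζ * χ;
               φ * ψ (ptil / C), φ / C * mtil * dψ - (π + ω)]) = 0 ↔
          lam = lam₁ ∨ lam = lam₂ :=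
  mosquito_nontrivial_equilibrium_stable_general φ ε π ω κ χ ζ C hφ hε hπ hω hκ hχ hζ hC ψ RM hRM
    ptil mtil dψ hψval hmtilpos hdψ
end

section
/- The divergence of the vector field F(m,p) = (κωζχ p − εm, φ m ψ(p/C) − (π+ω)p) equals −ε + (φ m / C)ψ'(p/C) − (π+ω) and is strictly negative everywhere on Ω = {(m,p) : m ≥ 0, 0 ≤ p ≤ C}; consequently (by the Bendixson criterion) the mosquito system has no periodic orbits contained in Ω. -/
/-!
Rather than integrating the divergence over the region enclosed by an orbit (Bendixson), we use
that the system is cooperative wherever `ψ ≥ 0`: the velocity `(m', p')` then solves a linear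
system with nonnegative off-diagonal coefficients, so once it lies in a closed quadrant it stays
there (compare with an exponential barrier). At a maximum of `m` the velocity lies on the axis
`m' = 0`, hence in a closed quadrant; from then on `m` and `p` are monotone, and being periodic
they are constant. If instead `ψ < 0` at the maximum of `p`, the equation for `p` forces `p ≡ 0`
at that maximum, hence everywhere, and then `m ≡ 0`.
-/

open Filter Topology Set Function

theorem HasDerivAt.eventually_nonneg_nhdsGT {g : ℝ → ℝ} {g' x : ℝ} (hg : HasDerivAt g g' x)
    (hx : 0 ≤ g x) (hg' : g x = 0 → 0 < g') : ∀ᶠ y in 𝓝[>] x, 0 ≤ g y := by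
  rcases hx.eq_or_lt with hx | hx
  · have hslope := (hasDerivAt_iff_tendsto_slope.mp hg).mono_left (nhdsGT_le_nhdsNE x)
    filter_upwards [hslope.eventually (lt_mem_nhds (hg' hx.symm)), self_mem_nhdsWithin]
      with y hy hxy
    rw [slope_def_field, ← hx, sub_zero] at hy
    exact (div_pos_iff_of_pos_right (sub_pos.mpr hxy)).mp hy |>.le
  · exact (hg.continuousAt.eventually (lt_mem_nhds hx)).filter_mono nhdsWithin_le_nhds
      |>.mono fun _ => le_of_lt

/-- Where `x + ε e^{L (s - τ)}` vanishes, `x' ≥ -2K ε e^{L (s - τ)}`, so `2 * K < L` makes the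
sum increase there. -/
theorem eventually_nonneg_add_barrier {x y : ℝ → ℝ} {α β K L ε τ s : ℝ}
    (hx : HasDerivAt x (α * x s + β * y s) s) (hα : α ≤ K) (hβ : 0 ≤ β) (hβK : β ≤ K)
    (hL : 2 * K < L) (hε : 0 < ε) (hxs : 0 ≤ x s + ε * Real.exp (L * (s - τ)))
    (hys : 0 ≤ y s + ε * Real.exp (L * (s - τ))) :
    ∀ᶠ r in 𝓝[>] s, 0 ≤ x r + ε * Real.exp (L * (r - τ)) := by
  set E := ε * Real.exp (L * (s - τ))
  have hE : 0 < E := by positivity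
  have hbarrier : HasDerivAt (fun r => ε * Real.exp (L * (r - τ))) (E * L) s := by
    have := (((hasDerivAt_id s).sub_const τ).const_mul L).exp.const_mul ε
    exact this.congr_deriv (by simp only [id, E]; ring)
  refine (hx.add hbarrier).eventually_nonneg_nhdsGT hxs fun hxs0 => ?_
  have hxE : x s = -E := by simp only [Pi.add_apply] at hxs0; linarith
  rw [hxE]
  nlinarith [mul_nonneg hβ hys, mul_nonneg (sub_nonneg.mpr hα) hE.le,
    mul_nonneg (sub_nonneg.mpr hβK) hE.le]

theorem nonneg_of_cooperative {u v a b c d : ℝ → ℝ} {K t₀ t : ℝ}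
    (hu : ∀ s, HasDerivAt u (a s * u s + b s * v s) s)
    (hv : ∀ s, HasDerivAt v (c s * u s + d s * v s) s)
    (ha : ∀ s, a s ≤ K) (hb : ∀ s, 0 ≤ b s ∧ b s ≤ K) (hc : ∀ s, 0 ≤ c s ∧ c s ≤ K)
    (hd : ∀ s, d s ≤ K) (hu₀ : 0 ≤ u t₀) (hv₀ : 0 ≤ v t₀) (ht : t₀ ≤ t) :
    0 ≤ u t ∧ 0 ≤ v t := by
  have hε_barrier : ∀ ε > 0, 0 ≤ u t + ε ∧ 0 ≤ v t + ε := by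
    intro ε hε
    let E : ℝ → ℝ := fun s => ε * Real.exp ((2 * K + 1) * (s - t))
    have hE : Continuous E := by fun_prop
    have hu_cont : Continuous u := continuous_iff_continuousAt.mpr fun s => (hu s).continuousAt
    have hv_cont : Continuous v := continuous_iff_continuousAt.mpr fun s => (hv s).continuousAt
    let S := {s | 0 ≤ u s + E s ∧ 0 ≤ v s + E s}
    have hS : IsClosed S :=
      (isClosed_le continuous_const (hu_cont.add hE)).inter
        (isClosed_le continuous_const (hv_cont.add hE))
    have ht₀S : t₀ ∈ S := ⟨by positivity, by positivity⟩
    have hstep : ∀ s ∈ S ∩ Ico t₀ t, S ∈ 𝓝[>] s := fun s ⟨⟨hus, hvs⟩, _⟩ =>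
      (eventually_nonneg_add_barrier (hu s) (ha s) (hb s).1 (hb s).2 (by linarith) hε hus hvs).and
        (eventually_nonneg_add_barrier ((hv s).congr_deriv (add_comm _ _)) (hd s) (hc s).1
          (hc s).2 (by linarith) hε hvs hus)
    have htS := (hS.inter isClosed_Icc).Icc_subset_of_forall_mem_nhdsWithin ht₀S hstep
      (right_mem_Icc.mpr ht)
    simpa [S, E] using htS
  exact ⟨le_of_forall_pos_le_add fun ε hε => (hε_barrier ε hε).1,
    le_of_forall_pos_le_add fun ε hε => (hε_barrier ε hε).2⟩

theorem Function.Periodic.exists_forall_le_hasDerivAt_eq_zero {f f' : ℝ → ℝ} {c : ℝ}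
    (hp : Periodic f c) (hc : c ≠ 0) (hf : ∀ t, HasDerivAt f (f' t) t) :
    ∃ t₁, (∀ t, f t ≤ f t₁) ∧ f' t₁ = 0 := by
  have hf_cont : Continuous f := continuous_iff_continuousAt.mpr fun t => (hf t).continuousAt
  obtain ⟨_, ⟨t₁, rfl⟩, hmax⟩ :=
    (hp.compact_of_continuous hc hf_cont).exists_isGreatest (range_nonempty f)
  have hle : ∀ t, f t ≤ f t₁ := fun t => hmax ⟨t, rfl⟩
  exact ⟨t₁, hle, IsLocalMax.hasDerivAt_eq_zero (Eventually.of_forall hle) (hf t₁)⟩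

theorem Function.Periodic.eq_of_monotoneOn_Ici {f : ℝ → ℝ} {c t₀ : ℝ} (hp : Periodic f c)
    (hc : 0 < c) (hf : MonotoneOn f (Ici t₀)) (t : ℝ) : f t = f t₀ := by
  obtain ⟨y, hy, hfy⟩ := hp.exists_mem_Ico hc t t₀
  rw [hfy]
  have hy₀ : t₀ ≤ y := hy.1
  refine le_antisymm ?_ (hf self_mem_Ici hy₀ hy₀)
  calc f y ≤ f (t₀ + c) := hf hy₀ (by simp only [mem_Ici]; linarith) hy.2.le
    _ = f t₀ := hp t₀

theorem monotoneOn_Ici_of_hasDerivAt_nonneg {f f' : ℝ → ℝ} {t₀ : ℝ}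
    (hf : ∀ t, HasDerivAt f (f' t) t) (hf' : ∀ t, t₀ ≤ t → 0 ≤ f' t) : MonotoneOn f (Ici t₀) :=
  monotoneOn_of_hasDerivWithinAt_nonneg (convex_Ici t₀)
    (fun t _ => (hf t).continuousAt.continuousWithinAt) (fun t _ => (hf t).hasDerivWithinAt)
    (fun t ht => hf' t (interior_subset ht))

theorem Function.Periodic.eq_const_of_cooperative {x y u v a b c d : ℝ → ℝ} {K T : ℝ}
    (hT : 0 < T) (hxT : Periodic x T) (hyT : Periodic y T)
    (hx : ∀ t, HasDerivAt x (u t) t) (hy : ∀ t, HasDerivAt y (v t) t)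
    (hu : ∀ s, HasDerivAt u (a s * u s + b s * v s) s)
    (hv : ∀ s, HasDerivAt v (c s * u s + d s * v s) s)
    (ha : ∀ s, a s ≤ K) (hb : ∀ s, 0 ≤ b s ∧ b s ≤ K) (hc : ∀ s, 0 ≤ c s ∧ c s ≤ K)
    (hd : ∀ s, d s ≤ K) (t : ℝ) : x t = x 0 ∧ y t = y 0 := by
  obtain ⟨t₂, -, hu₂⟩ := hxT.exists_forall_le_hasDerivAt_eq_zero hT.ne' hx
  wlog hv₂ : 0 ≤ v t₂ generalizing x y u v
  · have hneg := this (x := -x) (y := -y) (u := -u) (v := -v) (hxT.comp Neg.neg)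
      (hyT.comp Neg.neg) (fun t => (hx t).neg) (fun t => (hy t).neg)
      (fun s => (hu s).neg.congr_deriv (by simp only [Pi.neg_apply]; ring))
      (fun s => (hv s).neg.congr_deriv (by simp only [Pi.neg_apply]; ring))
      (by simp [hu₂]) (by simp only [Pi.neg_apply]; linarith)
    simpa using hneg
  have hflow := fun s (hs : t₂ ≤ s) =>
    nonneg_of_cooperative hu hv ha hb hc hd hu₂.ge hv₂ hs
  have hx_const := hxT.eq_of_monotoneOn_Ici hT
    (monotoneOn_Ici_of_hasDerivAt_nonneg hx fun s hs => (hflow s hs).1)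
  have hy_const := hyT.eq_of_monotoneOn_Ici hT
    (monotoneOn_Ici_of_hasDerivAt_nonneg hy fun s hs => (hflow s hs).2)
  exact ⟨(hx_const t).trans (hx_const 0).symm, (hy_const t).trans (hy_const 0).symm⟩

section Mosquito

variable {φ ε A B C : ℝ} {ψ dψ m p : ℝ → ℝ} {T : ℝ}

theorem mosquito_divergence_neg (hφ : 0 < φ) (hε : 0 < ε) (hB : 0 < B) (hC : 0 < C)
    (hdψ : ∀ x ∈ Icc (0 : ℝ) 1, dψ x ≤ 0) {m₀ p₀ : ℝ} (hm₀ : 0 ≤ m₀) (hp₀ : 0 ≤ p₀)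
    (hp₀C : p₀ ≤ C) : -ε + φ * m₀ / C * dψ (p₀ / C) - B < 0 := by
  have hdψ₀ : dψ (p₀ / C) ≤ 0 := hdψ _ (unitInterval.div_mem hp₀ hC.le hp₀C)
  have : φ * m₀ / C * dψ (p₀ / C) ≤ 0 := mul_nonpos_of_nonneg_of_nonpos (by positivity) hdψ₀
  linarith

theorem mosquito_eq_const_of_psi_nonneg (hφ : 0 < φ) (hε : 0 < ε) (hA : 0 < A) (hB : 0 < B)
    (hC : 0 < C) (hψ : ∀ x, HasDerivAt ψ (dψ x) x) (hdψ : ∀ x ∈ Icc (0 : ℝ) 1, dψ x ≤ 0)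
    (hT : 0 < T) (hm : ∀ t, HasDerivAt m (A * p t - ε * m t) t)
    (hp : ∀ t, HasDerivAt p (φ * m t * ψ (p t / C) - B * p t) t)
    (hΩ : ∀ t, 0 ≤ m t ∧ 0 ≤ p t ∧ p t ≤ C) (hmT : Periodic m T) (hpT : Periodic p T)
    {K : ℝ} (hψ_nonneg : ∀ t, 0 ≤ ψ (p t / C)) (hψ_le : ∀ t, ψ (p t / C) ≤ K) (t : ℝ) :
    m t = m 0 ∧ p t = p 0 := by
  have hv : ∀ t, HasDerivAt (fun s => φ * m s * ψ (p s / C) - B * p s)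
      (φ * ψ (p t / C) * (A * p t - ε * m t) +
        (φ * m t * dψ (p t / C) / C - B) * (φ * m t * ψ (p t / C) - B * p t)) t := by
    intro t
    have hψp := (hψ (p t / C)).comp t ((hp t).div_const C)
    exact ((((hm t).const_mul φ).mul hψp).sub ((hp t).const_mul B)).congr_deriv
      (by simp only [comp_apply]; ring)
  have hK : 0 ≤ φ * K := mul_nonneg hφ.le ((hψ_nonneg 0).trans (hψ_le 0))
  refine hmT.eq_const_of_cooperative (K := A + φ * K) hT hpT hm hp
    (a := fun _ => -ε) (b := fun _ => A) (c := fun t => φ * ψ (p t / C))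
    (d := fun t => φ * m t * dψ (p t / C) / C - B)
    (fun t => (((hp t).const_mul A).sub ((hm t).const_mul ε)).congr_deriv (by ring)) hv
    (fun _ => ?_) (fun _ => ⟨hA.le, ?_⟩) (fun t => ⟨?_, ?_⟩) (fun t => ?_) t
  · linarith
  · linarith
  · exact mul_nonneg hφ.le (hψ_nonneg t)
  · nlinarith [hψ_le t]
  · have hdψt : dψ (p t / C) ≤ 0 := hdψ _ (unitInterval.div_mem (hΩ t).2.1 hC.le (hΩ t).2.2)
    have : φ * m t * dψ (p t / C) / C ≤ 0 :=
      div_nonpos_of_nonpos_of_nonneg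
        (mul_nonpos_of_nonneg_of_nonpos (mul_nonneg hφ.le (hΩ t).1) hdψt) hC.le
    linarith

theorem mosquito_eq_const_of_periodic (hφ : 0 < φ) (hε : 0 < ε) (hA : 0 < A) (hB : 0 < B)
    (hC : 0 < C) (hψ : ∀ x, HasDerivAt ψ (dψ x) x) (hdψ : ∀ x ∈ Icc (0 : ℝ) 1, dψ x ≤ 0)
    (hT : 0 < T) (hm : ∀ t, HasDerivAt m (A * p t - ε * m t) t)
    (hp : ∀ t, HasDerivAt p (φ * m t * ψ (p t / C) - B * p t) t)
    (hΩ : ∀ t, 0 ≤ m t ∧ 0 ≤ p t ∧ p t ≤ C) (hmT : Periodic m T) (hpT : Periodic p T)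
    (t : ℝ) : m t = m 0 ∧ p t = p 0 := by
  have hmem : ∀ t, p t / C ∈ Icc (0 : ℝ) 1 := fun t =>
    unitInterval.div_mem (hΩ t).2.1 hC.le (hΩ t).2.2
  have hψ_anti : AntitoneOn ψ (Icc 0 1) :=
    antitoneOn_of_hasDerivWithinAt_nonpos (convex_Icc 0 1)
      (fun x _ => (hψ x).continuousAt.continuousWithinAt) (fun x _ => (hψ x).hasDerivWithinAt)
      (fun x hx => hdψ x (interior_subset hx))
  obtain ⟨t₁, hp_le, hp'₁⟩ := hpT.exists_forall_le_hasDerivAt_eq_zero hT.ne' hp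
  rcases lt_or_ge (ψ (p t₁ / C)) 0 with hψ_neg | hψ_nonneg
  · have hp_zero : ∀ t, p t = 0 := by
      have : φ * m t₁ * ψ (p t₁ / C) ≤ 0 :=
        mul_nonpos_of_nonneg_of_nonpos (mul_nonneg hφ.le (hΩ t₁).1) hψ_neg.le
      have : p t₁ ≤ 0 := by nlinarith
      exact fun t => le_antisymm ((hp_le t).trans this) (hΩ t).2.1
    obtain ⟨t₂, hm_le, hm'₂⟩ := hmT.exists_forall_le_hasDerivAt_eq_zero hT.ne' hm
    have hm_zero : ∀ t, m t = 0 := by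
      have : m t₂ = 0 := by simpa [hp_zero, hε.ne'] using hm'₂
      exact fun t => le_antisymm ((hm_le t).trans this.le) (hΩ t).1
    simp [hm_zero, hp_zero]
  · exact mosquito_eq_const_of_psi_nonneg hφ hε hA hB hC hψ hdψ hT hm hp hΩ hmT hpT
      (fun t => hψ_nonneg.trans <|
        hψ_anti (hmem t) (hmem t₁) (div_le_div_of_nonneg_right (hp_le t) hC.le))
      (fun t => hψ_anti (left_mem_Icc.mpr zero_le_one) (hmem t) (hmem t).1) t

end Mosquito

/-- the divergence of the vector field is strictly negative on Ω, and
consequently (Bendixson) there is no nonconstant periodic solution lying in Ω. -/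
theorem mosquito_no_periodic_orbits
    (φ ε π ω κ χ ζ C : ℝ) (hφ : 0 < φ) (hε : 0 < ε) (hπ : 0 < π) (hω : 0 < ω)
    (hκ : 0 < κ) (hχ : 0 < χ) (hζ : 0 < ζ) (hC : 0 < C)
    (ψ dψ : ℝ → ℝ) (hψ : ∀ x, HasDerivAt ψ (dψ x) x)
    (hdψ : ∀ x ∈ Set.Icc (0:ℝ) 1, dψ x ≤ 0) :
    (∀ m p : ℝ, 0 ≤ m → 0 ≤ p → p ≤ C →
      -ε + φ * m / C * dψ (p / C) - (π + ω) < 0) ∧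
    ¬ ∃ (m p : ℝ → ℝ) (T : ℝ), 0 < T ∧
        (∀ t : ℝ, HasDerivAt m (κ * ω * ζ * χ * p t - ε * m t) t) ∧
        (∀ t : ℝ, HasDerivAt p (φ * m t * ψ (p t / C) - (π + ω) * p t) t) ∧
        (∀ t : ℝ, 0 ≤ m t ∧ 0 ≤ p t ∧ p t ≤ C) ∧
        (∀ t : ℝ, m (t + T) = m t ∧ p (t + T) = p t) ∧
        ¬ (∀ t : ℝ, m t = m 0 ∧ p t = p 0) := by
  have hA : 0 < κ * ω * ζ * χ := by positivity
  have hB : 0 < π + ω := by positivity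
  refine ⟨fun m p hm hp hpC => mosquito_divergence_neg hφ hε hB hC hdψ hm hp hpC, ?_⟩
  rintro ⟨m, p, T, hT, hm, hp, hΩ, hper, hnonconst⟩
  exact hnonconst <| mosquito_eq_const_of_periodic hφ hε hA hB hC hψ hdψ hT hm hp hΩ
    (fun t => (hper t).1) (fun t => (hper t).2)
end

section
/- For ψ(x) = 1 − x, if R_M > 1 the mosquito system has exactly two equilibria in Ω: (0,0) and (m̃,p̃) = (C(κωζχ/ε)((R_M−1)/R_M), C(R_M−1)/R_M); if 0 < R_M ≤ 1, the only equilibrium in Ω is (0,0). -/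
/-!
Eliminating `m = (κωζχ/ε) p` from the first equation turns the second into
`p * (R_M (1 - p/C) - 1) = 0`, so an equilibrium has either `p = 0` or `p = C (R_M - 1)/R_M`.
For `0 ≤ p ≤ C` the factor `1 - p/C` lies in `[0, 1]`, so when `R_M ≤ 1` the second
alternative forces `p = 0`.
-/

section Field

variable {K : Type*} [Field K]

theorem logistic_equilibrium_iff {a b ε φ C m p : K} (hε : ε ≠ 0) (hb : b ≠ 0) (hC : C ≠ 0) :
    (a * p - ε * m = 0 ∧ φ * m * (1 - p / C) - b * p = 0) ↔
      m = a / ε * p ∧ (p = 0 ∨ a * φ / (ε * b) * (1 - p / C) = 1) := by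
  have hm : a * p - ε * m = 0 ↔ m = a / ε * p := by
    rw [sub_eq_zero, eq_comm, div_mul_eq_mul_div, eq_div_iff hε, mul_comm m]
  rw [hm, and_congr_right_iff]
  rintro rfl
  have factor : φ * (a / ε * p) * (1 - p / C) - b * p =
      b * p * (a * φ / (ε * b) * (1 - p / C) - 1) := by
    field_simp
  rw [factor, mul_eq_zero, mul_eq_zero, sub_eq_zero]
  simp only [hb, false_or]

theorem mul_one_sub_div_eq_one_iff {R C p : K} (hR : R ≠ 0) (hC : C ≠ 0) :
    R * (1 - p / C) = 1 ↔ p = C * ((R - 1) / R) := by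
  constructor <;> intro h
  · field_simp at h ⊢
    linear_combination -h
  · rw [h]
    field_simp
    ring

end Field

theorem eq_zero_of_mul_one_sub_div_eq_one {R C p : ℝ} (hR : R ≤ 1) (hC : 0 < C) (hp : 0 ≤ p)
    (hpC : p ≤ C) (h : R * (1 - p / C) = 1) : p = 0 := by
  have hx₀ : 0 ≤ 1 - p / C := by rw [sub_nonneg, div_le_one hC]; exact hpC
  have hx₁ : 1 - p / C ≤ 1 := by linarith [div_nonneg hp hC.le]
  have hx : 1 - p / C = 1 := le_antisymm hx₁ (by nlinarith)
  simpa [hC.ne'] using hx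

theorem mosquito_logistic_equilibria_general
    (φ ε π ω κ χ ζ C : ℝ) (hε : 0 < ε) (hπ : 0 < π) (hω : 0 < ω)
    (hC : 0 < C)
    (RM : ℝ) (hRM : RM = κ * ω * ζ * χ * φ / (ε * (π + ω))) :
    (1 < RM → ∀ m p : ℝ, 0 ≤ m → 0 ≤ p → p ≤ C →
      ((κ * ω * ζ * χ * p - ε * m = 0 ∧ φ * m * (1 - p / C) - (π + ω) * p = 0) ↔
        ((m = 0 ∧ p = 0) ∨
          (m = C * (κ * ω * ζ * χ / ε) * ((RM - 1) / RM) ∧ p = C * ((RM - 1) / RM))))) ∧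
    (RM ≤ 1 → ∀ m p : ℝ, 0 ≤ m → 0 ≤ p → p ≤ C →
      ((κ * ω * ζ * χ * p - ε * m = 0 ∧ φ * m * (1 - p / C) - (π + ω) * p = 0) ↔
        (m = 0 ∧ p = 0))) := by
  have equilibrium_iff (m p : ℝ) := hRM ▸
    logistic_equilibrium_iff (a := κ * ω * ζ * χ) (φ := φ) (m := m) (p := p)
      hε.ne' (add_pos hπ hω).ne' hC.ne'
  constructor
  · intro hRM₁ m p _ _ _
    rw [equilibrium_iff, mul_one_sub_div_eq_one_iff (by positivity) hC.ne']
    constructor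
    · rintro ⟨rfl, rfl | rfl⟩
      · simp
      · exact Or.inr ⟨by ring, rfl⟩
    · rintro (⟨rfl, rfl⟩ | ⟨rfl, rfl⟩)
      · simp
      · exact ⟨by ring, Or.inr rfl⟩
  · intro hRM₁ m p _ hp hpC
    rw [equilibrium_iff]
    constructor
    · rintro ⟨rfl, hp₀ | hR⟩
      · simp [hp₀]
      · simp [eq_zero_of_mul_one_sub_div_eq_one hRM₁ hC hp hpC hR]
    · rintro ⟨rfl, rfl⟩
      simp

/-- for ψ(x) = 1 − x, the equilibria in Ω are exactly (0,0) and,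
when R_M > 1, additionally (C(κωζχ/ε)(R_M−1)/R_M, C(R_M−1)/R_M). -/
theorem mosquito_logistic_equilibria
    (φ ε π ω κ χ ζ C : ℝ) (hφ : 0 < φ) (hε : 0 < ε) (hπ : 0 < π) (hω : 0 < ω)
    (hκ : 0 < κ) (hχ : 0 < χ) (hζ : 0 < ζ) (hC : 0 < C)
    (RM : ℝ) (hRM : RM = κ * ω * ζ * χ * φ / (ε * (π + ω))) :
    (1 < RM → ∀ m p : ℝ, 0 ≤ m → 0 ≤ p → p ≤ C →
      ((κ * ω * ζ * χ * p - ε * m = 0 ∧ φ * m * (1 - p / C) - (π + ω) * p = 0) ↔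
        ((m = 0 ∧ p = 0) ∨
          (m = C * (κ * ω * ζ * χ / ε) * ((RM - 1) / RM) ∧ p = C * ((RM - 1) / RM))))) ∧
    (RM ≤ 1 → ∀ m p : ℝ, 0 ≤ m → 0 ≤ p → p ≤ C →
      ((κ * ω * ζ * χ * p - ε * m = 0 ∧ φ * m * (1 - p / C) - (π + ω) * p = 0) ↔
        (m = 0 ∧ p = 0))) :=
  mosquito_logistic_equilibria_general φ ε π ω κ χ ζ C hε hπ hω hC RM hRM
end
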